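/- arXiv:0909.1895 — 7 statements merged into one kernel-verified Lean document; each statement's English description precedes it below -/
import Mathlib

section
/- Let V be a real vector space, N a seminorm on V, ε ∈ (0,1), and x₀,…,x_d ∈ V. If N(∑_{k=0}^d λ^k x_k) ≤ 1 for all λ ∈ [−ε, ε], then N(∑_{k=0}^d x_k) ≤ 2^{d²/2 + d} · ε^{−d}. -/
/-!
Interpolate the vector-valued polynomial `p λ = ∑ λ ^ k • x k` at the `d + 1` equally spaced
nodes `v j = -ε + 2 ε j / d` of `[-ε, ε]`: then `p 1 = ∑ L_i(1) • p (v i)` with the Lagrange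
basis `L_i`, so `N (p 1) ≤ ∑ |L_i(1)|`. Since `|1 - v j| ≤ 2` and `|v i - v j| = 2 ε |i - j| / d`,
`|L_i(1)| ≤ (d / ε) ^ d / (i! (d - i)!)`, and the binomial theorem sums these to
`(2 d / ε) ^ d / d!`. Finally `d ^ d ≤ 2 ^ (d choose 2) * d!`.
-/
open Finset Nat

open Polynomial in
theorem Lagrange.eval_basis {F ι : Type*} [Field F] [DecidableEq ι] (s : Finset ι) (v : ι → F)
    (i : ι) (t : F) :
    (Lagrange.basis s v i).eval t = ∏ j ∈ s.erase i, (t - v j) / (v i - v j) := by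
  simp only [Lagrange.basis, Lagrange.basisDivisor, eval_prod, eval_mul, eval_C, eval_sub, eval_X,
    div_eq_inv_mul]

open Polynomial in
theorem Lagrange.pow_eq_sum_pow_mul_eval_basis {F ι : Type*} [Field F] [DecidableEq ι]
    {s : Finset ι} {v : ι → F} (hvs : Set.InjOn v s) {k : ℕ} (hk : k < #s) (t : F) :
    t ^ k = ∑ i ∈ s, v i ^ k * (Lagrange.basis s v i).eval t := by
  have hdeg : (X ^ k : F[X]).degree < #s := by
    rw [degree_X_pow]; exact_mod_cast hk
  conv_lhs => rw [← eval_X (x := t), ← eval_pow, Lagrange.eq_interpolate hvs hdeg]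
  simp [Lagrange.interpolate_apply, eval_finsetSum]

theorem Lagrange.sum_pow_smul_eq_sum_eval_basis_smul {F V ι : Type*} [Field F] [AddCommGroup V]
    [Module F V] [DecidableEq ι] {s : Finset ι} {v : ι → F} (hvs : Set.InjOn v s) {n : ℕ}
    (hn : n ≤ #s) (x : Fin n → V) (t : F) :
    ∑ k : Fin n, t ^ (k : ℕ) • x k =
      ∑ i ∈ s, (Lagrange.basis s v i).eval t • ∑ k : Fin n, v i ^ (k : ℕ) • x k := by
  simp_rw [smul_sum, smul_smul, sum_comm (s := s), ← sum_smul]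
  refine sum_congr rfl fun k _ ↦ ?_
  rw [pow_eq_sum_pow_mul_eval_basis hvs (k.isLt.trans_le hn) t]
  simp_rw [mul_comm]

theorem Seminorm.le_sum_abs_eval_basis {V ι : Type*} [AddCommGroup V] [Module ℝ V]
    [DecidableEq ι] (N : Seminorm ℝ V) {s : Finset ι} {v : ι → ℝ} (hvs : Set.InjOn v s) {n : ℕ}
    (hn : n ≤ #s) (x : Fin n → V) (hx : ∀ i ∈ s, N (∑ k : Fin n, v i ^ (k : ℕ) • x k) ≤ 1)
    (t : ℝ) :
    N (∑ k : Fin n, t ^ (k : ℕ) • x k) ≤ ∑ i ∈ s, |(Lagrange.basis s v i).eval t| := by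
  rw [Lagrange.sum_pow_smul_eq_sum_eval_basis_smul hvs hn]
  refine (le_sum_of_subadditive N (map_zero N).le (map_add_le_add N) _ _).trans ?_
  refine sum_le_sum fun i hi ↦ ?_
  rw [map_smul_eq_mul, Real.norm_eq_abs]
  exact mul_le_of_le_one_right (abs_nonneg _) (hx i hi)

theorem prod_erase_range_abs_sub_natCast {d i : ℕ} (hi : i ≤ d) :
    ∏ j ∈ (range (d + 1)).erase i, |(i : ℝ) - j| = i ! * (d - i)! := by
  have hsplit : (range (d + 1)).erase i = range i ∪ Ico (i + 1) (d + 1) := by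
    ext j; simp only [mem_erase, mem_range, mem_union, mem_Ico]; omega
  have hdisj : Disjoint (range i) (Ico (i + 1) (d + 1)) := by
    rw [disjoint_left]; intro j; simp only [mem_range, mem_Ico]; omega
  have hbelow : ∏ j ∈ range i, |(i : ℝ) - j| = i ! := by
    rw [← descFactorial_self, descFactorial_eq_prod_range, Nat.cast_prod]
    refine prod_congr rfl fun j hj ↦ ?_
    rw [mem_range] at hj
    rw [Nat.cast_sub hj.le, abs_of_nonneg (sub_nonneg.2 (by exact_mod_cast hj.le))]
  have habove : ∏ j ∈ Ico (i + 1) (d + 1), |(i : ℝ) - j| = (d - i)! := by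
    rw [prod_Ico_eq_prod_range, ← prod_range_add_one_eq_factorial, Nat.cast_prod,
      show d + 1 - (i + 1) = d - i by omega]
    refine prod_congr rfl fun j _ ↦ ?_
    rw [abs_sub_comm]; push_cast; rw [abs_of_nonneg (by linarith)]; ring
  rw [hsplit, prod_union hdisj, hbelow, habove]

theorem Lagrange.abs_eval_basis_range_le {d i : ℕ} (hi : i ≤ d) {a h t M : ℝ} (hh : 0 < h)
    (hM : ∀ j ≤ d, |t - (a + h * j)| ≤ M) :
    |(Lagrange.basis (range (d + 1)) (fun j ↦ a + h * j) i).eval t| ≤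
      (M / h) ^ d / (i ! * (d - i)!) := by
  have hcard : #((range (d + 1)).erase i) = d := by
    rw [card_erase_of_mem (by simpa using hi), card_range, Nat.add_sub_cancel]
  have hM' : ∀ j ∈ (range (d + 1)).erase i, |t - (a + h * j)| ≤ M := fun j hj ↦
    hM j (Nat.lt_succ_iff.1 (mem_range.1 (mem_of_mem_erase hj)))
  calc |(Lagrange.basis (range (d + 1)) (fun j ↦ a + h * j) i).eval t|
      = (∏ j ∈ (range (d + 1)).erase i, |t - (a + h * j)|) /
          (h ^ d * ∏ j ∈ (range (d + 1)).erase i, |(i : ℝ) - j|) := by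
        simp_rw [Lagrange.eval_basis, abs_prod, abs_div, add_sub_add_left_eq_sub, ← mul_sub,
          abs_mul, abs_of_pos hh]
        rw [prod_div_distrib, prod_mul_distrib, prod_const, hcard]
    _ ≤ M ^ d / (h ^ d * (i ! * (d - i)!)) := by
        rw [prod_erase_range_abs_sub_natCast hi]
        gcongr
        calc _ ≤ ∏ _j ∈ (range (d + 1)).erase i, M := prod_le_prod (fun _ _ ↦ abs_nonneg _) hM'
          _ = M ^ d := by rw [prod_const, hcard]
    _ = (M / h) ^ d / (i ! * (d - i)!) := by rw [div_pow, div_div]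

theorem sum_range_one_div_factorial_mul_factorial (d : ℕ) :
    ∑ i ∈ range (d + 1), (1 : ℝ) / (i ! * (d - i)!) = 2 ^ d / d ! := by
  have hterm : ∀ i ∈ range (d + 1), (1 : ℝ) / (i ! * (d - i)!) = d.choose i / d ! := by
    intro i hi
    rw [Nat.cast_choose ℝ (Nat.lt_succ_iff.1 (mem_range.1 hi))]
    field_simp
  rw [sum_congr rfl hterm, ← sum_div, ← Nat.cast_sum, Nat.sum_range_choose, Nat.cast_pow,
    Nat.cast_two]

theorem Nat.pow_self_le_two_pow_choose_two_mul_factorial (d : ℕ) :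
    d ^ d ≤ 2 ^ d.choose 2 * d ! := by
  induction d with
  | zero => simp
  | succ d ih =>
    have hstep : (d + 1) ^ d ≤ 2 ^ d * d ^ d := by
      rcases Nat.eq_zero_or_pos d with rfl | hd
      · simp
      · rw [← Nat.mul_pow]; exact Nat.pow_le_pow_left (by omega) d
    calc (d + 1) ^ (d + 1) = (d + 1) * (d + 1) ^ d := by ring
      _ ≤ (d + 1) * (2 ^ d * (2 ^ d.choose 2 * d !)) := by gcongr; exact hstep.trans (by gcongr)
      _ = 2 ^ (d + 1).choose 2 * (d + 1)! := by
        rw [Nat.choose_succ_succ, Nat.choose_one_right, Nat.factorial_succ, pow_add]; ring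

theorem pow_self_div_factorial_le_two_rpow (d : ℕ) :
    (d : ℝ) ^ d / d ! ≤ 2 ^ ((d : ℝ) ^ 2 / 2) := by
  rw [div_le_iff₀ (by positivity)]
  calc (d : ℝ) ^ d ≤ 2 ^ d.choose 2 * d ! := by
        exact_mod_cast Nat.pow_self_le_two_pow_choose_two_mul_factorial d
    _ ≤ 2 ^ ((d : ℝ) ^ 2 / 2) * d ! := by
        rw [← Real.rpow_natCast, Nat.cast_choose_two]
        gcongr
        · norm_num
        · nlinarith

theorem Seminorm.apply_sum_pow_smul_le_of_le_one_on_Icc {V : Type*} [AddCommGroup V]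
    [Module ℝ V] (N : Seminorm ℝ V) {d : ℕ} (hd : d ≠ 0) {ε : ℝ} (hε : 0 < ε)
    (x : Fin (d + 1) → V)
    (h : ∀ lam ∈ Set.Icc (-ε) ε, N (∑ k : Fin (d + 1), lam ^ (k : ℕ) • x k) ≤ 1) (t : ℝ) :
    N (∑ k : Fin (d + 1), t ^ (k : ℕ) • x k) ≤ ((|t| + ε) * d / ε) ^ d / d ! := by
  have hstep : 0 < 2 * ε / d := by positivity
  set v : ℕ → ℝ := fun j ↦ -ε + 2 * ε / d * j
  have hv : ∀ j ≤ d, v j ∈ Set.Icc (-ε) ε := by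
    intro j hj
    have : 2 * ε / d * j ≤ 2 * ε := by
      rw [div_mul_eq_mul_div, div_le_iff₀ (by positivity)]; gcongr
    simp only [v, Set.mem_Icc]
    constructor <;> nlinarith
  have hinj : Set.InjOn v (range (d + 1)) := fun a _ b _ hab ↦ by
    simpa [v, hstep.ne'] using hab
  calc N (∑ k : Fin (d + 1), t ^ (k : ℕ) • x k)
      ≤ ∑ i ∈ range (d + 1), |(Lagrange.basis (range (d + 1)) v i).eval t| :=
        N.le_sum_abs_eval_basis hinj (by simp) x
          (fun i hi ↦ h _ (hv i (Nat.lt_succ_iff.1 (mem_range.1 hi)))) t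
    _ ≤ ∑ i ∈ range (d + 1), ((|t| + ε) / (2 * ε / d)) ^ d / (i ! * (d - i)!) := by
        refine sum_le_sum fun i hi ↦ ?_
        refine Lagrange.abs_eval_basis_range_le (Nat.lt_succ_iff.1 (mem_range.1 hi)) hstep
          fun j hj ↦ (abs_sub _ _).trans ?_
        gcongr
        exact abs_le.2 (hv j hj)
    _ = ((|t| + ε) * d / ε) ^ d / d ! := by
        simp_rw [div_eq_mul_inv _ ((_ ! : ℝ) * _), ← mul_sum, ← one_div,
          sum_range_one_div_factorial_mul_factorial, mul_div_assoc', ← mul_pow]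
        congr 2
        field_simp

/-- If `N (∑ λ^k • x k) ≤ 1` for all `λ ∈ [-ε, ε]`, then
`N (∑ x k) ≤ 2^(d²/2 + d) * ε^(-d)`. -/
theorem stmt0 {V : Type*} [AddCommGroup V] [Module ℝ V]
    (N : Seminorm ℝ V) (d : ℕ) (ε : ℝ) (hε : ε ∈ Set.Ioo (0:ℝ) 1)
    (x : Fin (d + 1) → V)
    (h : ∀ lam ∈ Set.Icc (-ε) ε, N (∑ k : Fin (d + 1), lam ^ (k : ℕ) • x k) ≤ 1) :
    N (∑ k : Fin (d + 1), x k) ≤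
      (2 : ℝ) ^ ((d : ℝ) ^ 2 / 2 + d) * ε ^ (-(d : ℝ)) := by
  obtain ⟨hε0, hε1⟩ := hε
  obtain rfl | hd := eq_or_ne d 0
  · simpa using h 0 ⟨by linarith, hε0.le⟩
  have hinterp := N.apply_sum_pow_smul_le_of_le_one_on_Icc hd hε0 x h 1
  simp only [one_pow, one_smul, abs_one] at hinterp
  calc N (∑ k : Fin (d + 1), x k) ≤ ((1 + ε) * d / ε) ^ d / d ! := hinterp
    _ ≤ (2 * d / ε) ^ d / d ! := by gcongr; linarith
    _ = (2 / ε) ^ d * ((d : ℝ) ^ d / d !) := by ring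
    _ ≤ (2 / ε) ^ d * 2 ^ ((d : ℝ) ^ 2 / 2) := by
        gcongr; exact pow_self_div_factorial_le_two_rpow d
    _ = (2 : ℝ) ^ ((d : ℝ) ^ 2 / 2 + d) * ε ^ (-(d : ℝ)) := by
        rw [Real.rpow_add two_pos, Real.rpow_natCast, Real.rpow_neg hε0.le, Real.rpow_natCast,
          div_pow]
        ring
end

section
/- Let ε ∈ (0,1), d ≥ 0 an integer, and x₀,…,x_d ∈ ℝ. If |∑_{k=0}^d λ^k x_k| ≤ 1 for all λ ∈ [−ε, ε], then |∑_{k=0}^d x_k| ≤ 2^{d²/2 + d} · ε^{−d}. -/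
/-!
Write `p(λ) = ∑ λ^k x_k`, so the claim bounds `p(1)`. Lagrange interpolation at the `d + 1`
equally spaced nodes `v_j = -ε + 2εj/d` of `[-ε, ε]` gives `|p(1)| ≤ ∑_j |L_j(1)|`, and
`|L_j(1)| = ∏_{k ≠ j} |1 - v_k| / |v_j - v_k| ≤ 2^d / ((2ε/d)^d j! (d-j)!)`. Summing over `j`
yields `(d/ε)^d 2^d / d!`, and `d^d ≤ 2^{d²/2} d!` finishes the estimate.
-/

open Finset Polynomial Nat

namespace Lagrange

variable {F : Type*} [Field F] {ι : Type*} [DecidableEq ι] {s : Finset ι}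

theorem eval_basis_s1 (v : ι → F) (i : ι) (t : F) :
    (Lagrange.basis s v i).eval t = ∏ j ∈ s.erase i, (t - v j) / (v i - v j) := by
  simp only [Lagrange.basis, basisDivisor, eval_prod, eval_mul, eval_C, eval_sub, eval_X]
  exact prod_congr rfl fun _ _ ↦ inv_mul_eq_div _ _

theorem eval_eq_sum_eval_basis {v : ι → F} (hvs : Set.InjOn v s) {p : F[X]} (hp : p.degree < #s)
    (t : F) :
    p.eval t = ∑ i ∈ s, p.eval (v i) * (Lagrange.basis s v i).eval t := by
  conv_lhs => rw [eq_interpolate hvs hp]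
  simp only [interpolate_apply, eval_finsetSum, eval_mul, eval_C]

theorem abs_eval_le_mul_sum_abs_eval_basis {v : ι → ℝ} (hvs : Set.InjOn v s)
    {p : ℝ[X]} (hp : p.degree < #s) {M : ℝ} (hM : ∀ i ∈ s, |p.eval (v i)| ≤ M) (t : ℝ) :
    |p.eval t| ≤ M * ∑ i ∈ s, |(Lagrange.basis s v i).eval t| := by
  rw [eval_eq_sum_eval_basis hvs hp, mul_sum]
  refine (abs_sum_le_sum_abs _ _).trans (sum_le_sum fun i hi ↦ ?_)
  rw [abs_mul]
  exact mul_le_mul_of_nonneg_right (hM i hi) (abs_nonneg _)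

end Lagrange

theorem prod_erase_range_abs_natCast_sub {d j : ℕ} (hj : j ≤ d) :
    ∏ k ∈ (range (d + 1)).erase j, |(j : ℝ) - k| = j ! * (d - j)! := by
  set g : ℕ → ℝ := fun k ↦ if k = j then 1 else |(j : ℝ) - k|
  have hg : ∏ k ∈ (range (d + 1)).erase j, |(j : ℝ) - k| = ∏ k ∈ range (d + 1), g k := by
    rw [← prod_erase _ (by simp [g] : g j = 1)]
    exact prod_congr rfl fun k hk ↦ by simp [g, ne_of_mem_erase hk]
  have hbelow : ∏ k ∈ range j, g k = j ! := by
    rw [← prod_range_reflect, ← prod_range_add_one_eq_factorial]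
    push_cast
    refine prod_congr rfl fun k hk ↦ ?_
    have hk : k < j := mem_range.mp hk
    have hcast : (j : ℝ) - ((j - 1 - k : ℕ) : ℝ) = k + 1 := by
      rw [Nat.cast_sub (by omega), Nat.cast_sub (by omega)]; push_cast; ring
    simp only [g, if_neg (by omega : j - 1 - k ≠ j), hcast]
    exact abs_of_pos (by positivity)
  have habove : ∏ k ∈ range (d - j + 1), g (j + k) = (d - j)! := by
    rw [prod_range_succ', ← prod_range_add_one_eq_factorial]
    push_cast
    simp only [g, add_zero, if_pos, mul_one]
    refine prod_congr rfl fun k _ ↦ ?_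
    rw [if_neg (by omega)]
    push_cast
    rw [abs_sub_comm, add_sub_cancel_left]
    exact abs_of_pos (by positivity)
  rw [hg, (by omega : d + 1 = j + (d - j + 1)), prod_range_add, hbelow, habove]

theorem card_erase_range_succ {d j : ℕ} (hj : j ≤ d) : #((range (d + 1)).erase j) = d := by
  rw [card_erase_of_mem (mem_range.mpr (by omega)), card_range, add_tsub_cancel_right]

theorem prod_erase_range_abs_sub_affine (a h : ℝ) {d j : ℕ} (hj : j ≤ d) :
    ∏ k ∈ (range (d + 1)).erase j, |(a + h * j) - (a + h * k)| =
      |h| ^ d * (j ! * (d - j)!) := by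
  calc _ = ∏ k ∈ (range (d + 1)).erase j, |h| * |(j : ℝ) - k| :=
        prod_congr rfl fun k _ ↦ by rw [← abs_mul, mul_sub, add_sub_add_left_eq_sub]
    _ = _ := by
        rw [prod_mul_distrib, prod_const, card_erase_range_succ hj,
          prod_erase_range_abs_natCast_sub hj]

theorem sum_range_inv_factorial_mul_factorial (d : ℕ) :
    ∑ j ∈ range (d + 1), ((j ! * (d - j)! : ℝ))⁻¹ = 2 ^ d / d ! := by
  have hterm : ∀ j ∈ range (d + 1), ((j ! * (d - j)! : ℝ))⁻¹ = d.choose j / d ! := by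
    intro j hj
    rw [Nat.cast_choose ℝ (Nat.lt_succ_iff.mp (mem_range.mp hj))]
    field_simp
  rw [sum_congr rfl hterm, ← sum_div]
  exact_mod_cast congrArg (· / (d ! : ℝ)) (congrArg Nat.cast (Nat.sum_range_choose d))

theorem abs_eval_basis_range_affine_le {a h t R : ℝ} {d j : ℕ} (hj : j ≤ d)
    (hR : ∀ k ≤ d, |t - (a + h * k)| ≤ R) :
    |(Lagrange.basis (range (d + 1)) (fun k : ℕ ↦ a + h * k) j).eval t|
      ≤ R ^ d / (|h| ^ d * (j ! * (d - j)!)) := by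
  have hnum : ∏ k ∈ (range (d + 1)).erase j, |t - (a + h * k)| ≤ R ^ d := by
    calc _ ≤ ∏ _k ∈ (range (d + 1)).erase j, R :=
          prod_le_prod (fun _ _ ↦ abs_nonneg _)
            fun k hk ↦ hR k (Nat.lt_succ_iff.mp (mem_range.mp (mem_of_mem_erase hk)))
      _ = R ^ d := by rw [prod_const, card_erase_range_succ hj]
  rw [Lagrange.eval_basis_s1, abs_prod, ← prod_erase_range_abs_sub_affine a h hj]
  simp_rw [abs_div]
  rw [prod_div_distrib]
  exact div_le_div_of_nonneg_right hnum (prod_nonneg fun _ _ ↦ abs_nonneg _)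

theorem sum_abs_eval_basis_range_affine_le {a h t R : ℝ} {d : ℕ}
    (hR : ∀ k ≤ d, |t - (a + h * k)| ≤ R) :
    ∑ j ∈ range (d + 1), |(Lagrange.basis (range (d + 1)) (fun k : ℕ ↦ a + h * k) j).eval t|
      ≤ (R / |h|) ^ d * (2 ^ d / d !) := by
  calc _ ≤ ∑ j ∈ range (d + 1), R ^ d / (|h| ^ d * (j ! * (d - j)!)) :=
        sum_le_sum fun j hj ↦
          abs_eval_basis_range_affine_le (Nat.lt_succ_iff.mp (mem_range.mp hj)) hR
    _ = (R / |h|) ^ d * ∑ j ∈ range (d + 1), ((j ! * (d - j)! : ℝ))⁻¹ := by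
        rw [mul_sum]
        exact sum_congr rfl fun j _ ↦ by rw [← div_div, div_pow, div_eq_mul_inv]
    _ = _ := by rw [sum_range_inv_factorial_mul_factorial]

theorem abs_eval_le_of_abs_eval_le_one_on_Icc {p : ℝ[X]} {d : ℕ} (hp : p.natDegree ≤ d)
    {ε : ℝ} (hε : 0 < ε) (hε1 : ε ≤ 1) (hbound : ∀ s ∈ Set.Icc (-ε) ε, |p.eval s| ≤ 1)
    {t : ℝ} (ht : t ∈ Set.Icc (-1) 1) :
    |p.eval t| ≤ (d / ε) ^ d * (2 ^ d / d !) := by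
  -- for `d = 0` the step `h` is `0` (division by zero), leaving the single node `-ε`
  set h : ℝ := 2 * ε / d
  set v : ℕ → ℝ := fun k ↦ -ε + h * k
  have hv_mem : ∀ k ≤ d, v k ∈ Set.Icc (-ε) ε := by
    intro k hk
    have hkd : (k : ℝ) / d ≤ 1 := div_le_one_of_le₀ (by exact_mod_cast hk) (Nat.cast_nonneg d)
    have hk0 : (0 : ℝ) ≤ k / d := by positivity
    have hhk : h * k = 2 * ε * (k / d) := by ring
    constructor <;> nlinarith
  have hv_inj : Set.InjOn v (range (d + 1)) := by
    intro i hi j hj hij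
    rcases eq_or_ne d 0 with hd | hd
    · simp only [hd, coe_range, zero_add, Set.mem_Iio] at hi hj
      omega
    · have hh : h ≠ 0 := by positivity
      exact_mod_cast mul_left_cancel₀ hh (add_left_cancel hij)
  have hdeg : p.degree < #(range (d + 1)) := by
    rw [card_range]
    exact (degree_le_of_natDegree_le hp).trans_lt (by exact_mod_cast Nat.lt_succ_self d)
  have hR : ∀ k ≤ d, |t - v k| ≤ 2 := by
    intro k hk
    obtain ⟨hv₁, hv₂⟩ := hv_mem k hk
    obtain ⟨ht₁, ht₂⟩ := ht
    exact abs_le.mpr ⟨by linarith, by linarith⟩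
  calc |p.eval t| ≤ 1 * ∑ j ∈ range (d + 1), |(Lagrange.basis (range (d + 1)) v j).eval t| :=
        Lagrange.abs_eval_le_mul_sum_abs_eval_basis hv_inj hdeg
          (fun k hk ↦ hbound _ (hv_mem k (Nat.lt_succ_iff.mp (mem_range.mp hk)))) t
    _ ≤ (2 / |h|) ^ d * (2 ^ d / d !) := by
        rw [one_mul]
        exact sum_abs_eval_basis_range_affine_le hR
    _ = (d / ε) ^ d * (2 ^ d / d !) := by
        rw [abs_of_nonneg (by positivity), div_div_eq_mul_div, mul_div_mul_left _ _ two_ne_zero]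

theorem pow_two_mul_self_le_factorial_sq_mul_two_pow_sq (d : ℕ) :
    d ^ (2 * d) ≤ d ! ^ 2 * 2 ^ d ^ 2 := by
  induction d with
  | zero => simp
  | succ n ih =>
    rcases Nat.eq_zero_or_pos n with rfl | hn
    · decide
    calc (n + 1) ^ (2 * (n + 1)) = (n + 1) ^ 2 * (n + 1) ^ (2 * n) := by ring
      _ ≤ (n + 1) ^ 2 * (2 * n) ^ (2 * n) := by gcongr; omega
      _ = (n + 1) ^ 2 * 2 ^ (2 * n) * n ^ (2 * n) := by rw [Nat.mul_pow]; ring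
      _ ≤ (n + 1) ^ 2 * 2 ^ (2 * n) * (n ! ^ 2 * 2 ^ n ^ 2) := by gcongr
      _ = (n + 1)! ^ 2 * 2 ^ (n ^ 2 + 2 * n) := by rw [Nat.factorial_succ]; ring
      _ ≤ (n + 1)! ^ 2 * 2 ^ (n + 1) ^ 2 := by gcongr <;> [norm_num; nlinarith]

theorem natCast_pow_le_two_rpow_mul_factorial (d : ℕ) :
    (d : ℝ) ^ d ≤ 2 ^ ((d : ℝ) ^ 2 / 2) * d ! := by
  have hsq : ((2 : ℝ) ^ ((d : ℝ) ^ 2 / 2)) ^ 2 = 2 ^ d ^ 2 := by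
    rw [← Real.rpow_natCast, ← Real.rpow_mul zero_le_two]
    norm_num
    exact_mod_cast Real.rpow_natCast 2 (d ^ 2)
  rw [← pow_le_pow_iff_left₀ (by positivity) (by positivity) two_ne_zero, mul_pow, hsq,
    ← pow_mul, mul_comm d 2]
  exact_mod_cast (pow_two_mul_self_le_factorial_sq_mul_two_pow_sq d).trans_eq (mul_comm _ _)

theorem div_pow_mul_two_pow_div_factorial_le (d : ℕ) {ε : ℝ} (hε : 0 < ε) :
    (d / ε) ^ d * (2 ^ d / d !) ≤ 2 ^ ((d : ℝ) ^ 2 / 2 + d) * ε ^ (-(d : ℝ)) := by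
  rw [Real.rpow_add two_pos, Real.rpow_natCast, Real.rpow_neg hε.le, Real.rpow_natCast]
  calc (d / ε) ^ d * (2 ^ d / d !) = (d : ℝ) ^ d * (2 ^ d / d !) * (ε ^ d)⁻¹ := by ring
    _ ≤ 2 ^ ((d : ℝ) ^ 2 / 2) * d ! * (2 ^ d / d !) * (ε ^ d)⁻¹ := by
        gcongr; exact natCast_pow_le_two_rpow_mul_factorial d
    _ = 2 ^ ((d : ℝ) ^ 2 / 2) * 2 ^ d * (ε ^ d)⁻¹ := by field_simp

/-- scalar version of Lemma on polynomial bounds. -/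
theorem stmt1 (d : ℕ) (ε : ℝ) (hε : ε ∈ Set.Ioo (0:ℝ) 1) (x : Fin (d + 1) → ℝ)
    (h : ∀ lam ∈ Set.Icc (-ε) ε, |∑ k : Fin (d + 1), lam ^ (k : ℕ) * x k| ≤ 1) :
    |∑ k : Fin (d + 1), x k| ≤ (2 : ℝ) ^ ((d : ℝ) ^ 2 / 2 + d) * ε ^ (-(d : ℝ)) := by
  obtain ⟨hε0, hε1⟩ := hε
  have hp_eval : ∀ t, (ofFn (d + 1) x).eval t = ∑ k : Fin (d + 1), t ^ (k : ℕ) * x k := by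
    intro t
    simp only [ofFn_eq_sum_monomial, eval_finsetSum, eval_monomial, mul_comm]
  have hp_deg : (ofFn (d + 1) x).natDegree ≤ d :=
    Nat.lt_succ_iff.mp (ofFn_natDegree_lt (Nat.succ_pos d) x)
  calc |∑ k, x k| = |(ofFn (d + 1) x).eval 1| := by simp only [hp_eval, one_pow, one_mul]
    _ ≤ (d / ε) ^ d * (2 ^ d / d !) :=
        abs_eval_le_of_abs_eval_le_one_on_Icc hp_deg hε0 hε1.le
          (fun s hs ↦ (hp_eval s).symm ▸ h s hs) ⟨by norm_num, le_rfl⟩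
    _ ≤ _ := div_pow_mul_two_pow_div_factorial_le d hε0
end

section
/- Let Z be a real random variable, q ∈ (0,∞), p ∈ (0,q), and suppose there exist β₁, β₂ > 0 and c > 0 such that P(|Z| ≥ c) ≥ β₁ and E[|Z|^q · 1_{|Z| > s}] ≤ β₂ s^q P(|Z| > s) for all s ≥ c. Then E[|Z|^q]^{1/q} ≤ (β₂ ∨ 1)^{1/q} · β₁^{−1/p} · E[|Z|^p]^{1/p}; in particular ‖Z‖_q / ‖Z‖_p ≤ (β₂ ∨ 1)^{1/q} β₁^{−1/p}. -/
open MeasureTheory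

/-- under condition `C_q`, equivalence of moments:
`‖Z‖_q ≤ (β₂ ∨ 1)^(1/q) β₁^(-1/p) ‖Z‖_p`. -/
theorem stmt2 {Ω : Type*} [MeasurableSpace Ω] (μ : Measure Ω) [IsProbabilityMeasure μ]
    (Z : Ω → ℝ) (hZ : AEMeasurable Z μ)
    (q p : ℝ) (hq : 0 < q) (hp : 0 < p) (hpq : p < q)
    (hint : Integrable (fun ω => |Z ω| ^ q) μ)
    (β₁ β₂ c : ℝ) (hβ₁ : 0 < β₁) (hβ₂ : 0 < β₂) (hc : 0 < c)
    (hlow : ENNReal.ofReal β₁ ≤ μ {ω | c ≤ |Z ω|})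
    (htail : ∀ s ≥ c,
      (∫ ω in {ω | s < |Z ω|}, |Z ω| ^ q ∂μ) ≤ β₂ * s ^ q * (μ {ω | s < |Z ω|}).toReal) :
    (∫ ω, |Z ω| ^ q ∂μ) ^ (1 / q) ≤
      (max β₂ 1) ^ (1 / q) * β₁ ^ (-(1 / p)) * (∫ ω, |Z ω| ^ p ∂μ) ^ (1 / p) := by
  have habs : AEMeasurable (fun ω => |Z ω|) μ := measurable_abs.comp_aemeasurable hZ
  have hmeasp : AEMeasurable (fun ω => |Z ω| ^ p) μ :=
    (Real.continuous_rpow_const hp.le).measurable.comp_aemeasurable habs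
  have hintp : Integrable (fun ω => |Z ω| ^ p) μ := by
    refine Integrable.mono' (hint.add (integrable_const 1)) hmeasp.aestronglyMeasurable
      (Filter.Eventually.of_forall fun ω => ?_)
    rw [Real.norm_eq_abs, abs_of_nonneg (Real.rpow_nonneg (abs_nonneg _) _)]
    rcases le_total (|Z ω|) 1 with h | h
    · calc |Z ω| ^ p ≤ 1 := Real.rpow_le_one (abs_nonneg _) h hp.le
        _ ≤ |Z ω| ^ q + 1 := le_add_of_nonneg_left (Real.rpow_nonneg (abs_nonneg _) _)
    · calc |Z ω| ^ p ≤ |Z ω| ^ q := Real.rpow_le_rpow_of_exponent_le h hpq.le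
        _ ≤ |Z ω| ^ q + 1 := le_add_of_nonneg_right one_pos.le
  set A := ∫ ω, |Z ω| ^ p ∂μ with hA
  -- Markov: c^p * β₁ ≤ A
  have hβ₁le : β₁ ≤ (μ {ω | c ≤ |Z ω|}).toReal := by
    have := ENNReal.toReal_mono (measure_ne_top μ _) hlow
    rwa [ENNReal.toReal_ofReal hβ₁.le] at this
  have hmarkov : c ^ p * β₁ ≤ A := by
    have h1 : c ^ p * (μ {ω | c ^ p ≤ |Z ω| ^ p}).toReal ≤ A :=
      mul_meas_ge_le_integral_of_nonneg
        (Filter.Eventually.of_forall fun ω => Real.rpow_nonneg (abs_nonneg _) _) hintp _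
    have hset : {ω | c ^ p ≤ |Z ω| ^ p} = {ω | c ≤ |Z ω|} := by
      ext ω
      exact Real.rpow_le_rpow_iff hc.le (abs_nonneg _) hp
    rw [hset] at h1
    calc c ^ p * β₁ ≤ c ^ p * (μ {ω | c ≤ |Z ω|}).toReal := by
          exact mul_le_mul_of_nonneg_left hβ₁le (Real.rpow_nonneg hc.le _)
      _ ≤ A := h1
  have hApos : 0 < A := lt_of_lt_of_le (by positivity) hmarkov
  set s := (A / β₁) ^ (1 / p) with hs
  have hspos : 0 < s := Real.rpow_pos_of_pos (div_pos hApos hβ₁) _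
  have hcs : c ≤ s := by
    have h1 : c ^ p ≤ A / β₁ := (le_div_iff₀ hβ₁).mpr hmarkov
    have h2 : (c ^ p) ^ (1 / p) ≤ s :=
      Real.rpow_le_rpow (by positivity) h1 (by positivity)
    rwa [one_div, Real.rpow_rpow_inv hc.le hp.ne'] at h2
  set M := max β₂ 1 with hM
  have hM1 : (1:ℝ) ≤ M := le_max_right _ _
  set T := {ω | s < |Z ω|} with hT
  have hTnm : NullMeasurableSet T μ :=
    nullMeasurableSet_lt aemeasurable_const habs
  -- key bound
  have key : (∫ ω, |Z ω| ^ q ∂μ) ≤ M * s ^ q := by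
    have hsplit : (∫ ω in T, |Z ω| ^ q ∂μ) + (∫ ω in Tᶜ, |Z ω| ^ q ∂μ)
        = ∫ ω, |Z ω| ^ q ∂μ := integral_add_compl₀ hTnm hint
    have hb1 : (∫ ω in Tᶜ, |Z ω| ^ q ∂μ) ≤ s ^ q * (μ Tᶜ).toReal := by
      have h1 : (∫ ω in Tᶜ, |Z ω| ^ q ∂μ) ≤ ∫ _ω in Tᶜ, s ^ q ∂μ := by
        refine integral_mono_ae (hint.restrict) (integrable_const _) ?_
        filter_upwards [ae_restrict_mem₀ hTnm.compl] with ω hω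
        exact Real.rpow_le_rpow (abs_nonneg _) (not_lt.mp hω) hq.le
      rwa [setIntegral_const, smul_eq_mul, mul_comm] at h1
    have hb2 := htail s hcs
    have hsum : (μ T).toReal + (μ Tᶜ).toReal = 1 := by
      rw [← ENNReal.toReal_add (measure_ne_top μ _) (measure_ne_top μ _),
        measure_add_measure_compl₀ hTnm, measure_univ, ENNReal.toReal_one]
    have hβ₂M : β₂ ≤ M := le_max_left _ _
    calc (∫ ω, |Z ω| ^ q ∂μ)
        = (∫ ω in T, |Z ω| ^ q ∂μ) + (∫ ω in Tᶜ, |Z ω| ^ q ∂μ) := hsplit.symm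
      _ ≤ β₂ * s ^ q * (μ T).toReal + s ^ q * (μ Tᶜ).toReal := add_le_add hb2 hb1
      _ ≤ M * s ^ q * (μ T).toReal + M * s ^ q * (μ Tᶜ).toReal :=
          add_le_add
            (mul_le_mul_of_nonneg_right
              (mul_le_mul_of_nonneg_right hβ₂M (by positivity)) ENNReal.toReal_nonneg)
            (mul_le_mul_of_nonneg_right
              (le_mul_of_one_le_left (by positivity) hM1) ENNReal.toReal_nonneg)
      _ = M * s ^ q * ((μ T).toReal + (μ Tᶜ).toReal) := by ring
      _ = M * s ^ q := by rw [hsum, mul_one]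
  -- conclude
  have hint_nonneg : 0 ≤ ∫ ω, |Z ω| ^ q ∂μ :=
    integral_nonneg fun ω => Real.rpow_nonneg (abs_nonneg _) _
  have hfin : (∫ ω, |Z ω| ^ q ∂μ) ^ (1 / q) ≤ (M * s ^ q) ^ (1 / q) :=
    Real.rpow_le_rpow hint_nonneg key (by positivity)
  have hrhs : (M * s ^ q) ^ (1 / q) = M ^ (1 / q) * β₁ ^ (-(1 / p)) * A ^ (1 / p) := by
    rw [Real.mul_rpow (by positivity) (by positivity), one_div,
      Real.rpow_rpow_inv hspos.le hq.ne', hs, Real.div_rpow hApos.le hβ₁.le,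
      div_eq_mul_inv, ← Real.rpow_neg hβ₁.le]
    ring
  calc (∫ ω, |Z ω| ^ q ∂μ) ^ (1 / q) ≤ (M * s ^ q) ^ (1 / q) := hfin
    _ = M ^ (1 / q) * β₁ ^ (-(1 / p)) * A ^ (1 / p) := hrhs
end

section
/- For every z > 0, the modified Bessel function of the third kind of index 1, K₁(z) = (1/2)∫₀^∞ e^{−z(y + y^{−1})/2} dy, satisfies K₁(z) ≥ e^{−z}/z. -/
open MeasureTheory Set Real

lemma exp_aux_integral (z : ℝ) (hz : 0 < z) :
    ∫ y in Set.Ioi (1:ℝ), Real.exp (-z * (y + 1) / 2) = (2 / z) * Real.exp (-z) := by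
  have hb : (0:ℝ) < z / 2 := by linarith
  have h : ∀ y : ℝ, Real.exp (-z * (y + 1) / 2) = Real.exp (-(z/2)) * Real.exp (-(z/2 * y)) := by
    intro y
    rw [← Real.exp_add]
    ring_nf
  simp_rw [h]
  rw [integral_const_mul]
  have := integral_comp_mul_left_Ioi (fun x => Real.exp (-x)) 1 hb
  simp only [smul_eq_mul, mul_one] at this
  rw [this, integral_exp_neg_Ioi,
    show Real.exp (-(z/2)) * ((z/2)⁻¹ * Real.exp (-(z/2)))
      = (z/2)⁻¹ * (Real.exp (-(z/2)) * Real.exp (-(z/2))) from by ring, ← Real.exp_add,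
    show -(z/2) + -(z/2) = -z from by ring]
  rw [show (z/2)⁻¹ = 2/z from by field_simp]

lemma integrable_aux (z : ℝ) (hz : 0 < z) :
    IntegrableOn (fun y => Real.exp (-z * (y + y⁻¹) / 2)) (Set.Ioi (0:ℝ)) := by
  have hmeas : Measurable fun y : ℝ => Real.exp (-z * (y + y⁻¹) / 2) := by
    fun_prop
  apply (exp_neg_integrableOn_Ioi 0 (by linarith : (0:ℝ) < z/2)).mono'
    hmeas.aestronglyMeasurable
  filter_upwards [ae_restrict_mem measurableSet_Ioi] with y hy
  rw [Real.norm_eq_abs, abs_of_pos (Real.exp_pos _)]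
  apply Real.exp_le_exp.mpr
  have hy0 : (0:ℝ) < y := hy
  have : 0 ≤ y⁻¹ := by positivity
  nlinarith

/-- `K₁(z) = (1/2)∫₀^∞ e^{-z(y+1/y)/2} dy ≥ e^{-z}/z` for `z > 0`. -/
theorem stmt8 (z : ℝ) (hz : 0 < z) :
    Real.exp (-z) / z ≤ (1 / 2) * ∫ y in Set.Ioi (0:ℝ), Real.exp (-z * (y + y⁻¹) / 2) := by
  have hint := integrable_aux z hz
  have hint1 : IntegrableOn (fun y => Real.exp (-z * (y + y⁻¹) / 2)) (Set.Ioi (1:ℝ)) :=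
    hint.mono_set (Set.Ioi_subset_Ioi (by norm_num))
  have hg : IntegrableOn (fun y => Real.exp (-z * (y + 1) / 2)) (Set.Ioi (1:ℝ)) := by
    have hb : (0:ℝ) < z / 2 := by linarith
    apply MeasureTheory.Integrable.congr
      ((exp_neg_integrableOn_Ioi 1 hb).const_mul (Real.exp (-(z/2))))
    filter_upwards with y
    rw [← Real.exp_add]
    ring_nf
  have step1 : ∫ y in Set.Ioi (1:ℝ), Real.exp (-z * (y + 1) / 2)
      ≤ ∫ y in Set.Ioi (1:ℝ), Real.exp (-z * (y + y⁻¹) / 2) := by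
    apply setIntegral_mono_on hg hint1 measurableSet_Ioi
    intro y hy
    apply Real.exp_le_exp.mpr
    have hy1 : (1:ℝ) < y := hy
    have : y⁻¹ ≤ 1 := by
      rw [inv_le_one_iff₀]; right; linarith
    nlinarith
  have step2 : ∫ y in Set.Ioi (1:ℝ), Real.exp (-z * (y + y⁻¹) / 2)
      ≤ ∫ y in Set.Ioi (0:ℝ), Real.exp (-z * (y + y⁻¹) / 2) := by
    apply setIntegral_mono_set hint ?_ (HasSubset.Subset.eventuallyLE (Set.Ioi_subset_Ioi (by norm_num)))
    filter_upwards with y using (Real.exp_pos _).le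
  have key := exp_aux_integral z hz
  have : Real.exp (-z) / z = (1/2) * ((2/z) * Real.exp (-z)) := by field_simp
  rw [this]
  have := step1.trans step2
  linarith [key ▸ this]
end

section
/- Let F be a strongly Lindelöf locally convex Hausdorff topological vector space and N : F → [0,∞] a lower semicontinuous pseudo-seminorm (i.e., N(λx) = |λ|N(x) and N(x+y) ≤ N(x) + N(y)). Then there exists a sequence (xₙ*) of continuous linear functionals on F such that N(x) = sup_{n≥1} |xₙ*(x)| for all x ∈ F. -/
open scoped ENNReal
open Set

/-!
The unit ball `{N ≤ 1}` is closed and convex, so by Hahn–Banach every `x` with `1 < N x` is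
separated from it by a continuous functional `f`; rescaled, `f ≤ N` everywhere and `1 < f x`.
The open sets `{1 < f}` cover the open set `{1 < N}`, and hereditary Lindelöfness extracts a
countable subcover. By homogeneity, `N` is then the supremum of the `|fₙ|`.
-/

section PseudoSeminorm

variable {F : Type*} [AddCommGroup F] [Module ℝ F] {N : F → ℝ≥0∞}

def dominatedFunctionals [TopologicalSpace F] (N : F → ℝ≥0∞) : Set (F →L[ℝ] ℝ) :=
  {f | ∀ y, ENNReal.ofReal (f y) ≤ N y}

lemma zero_mem_dominatedFunctionals [TopologicalSpace F] :
    (0 : F →L[ℝ] ℝ) ∈ dominatedFunctionals N := by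
  simp [dominatedFunctionals]

lemma convex_setOf_le_one (hhom : ∀ (c : ℝ) (x : F), N (c • x) = ENNReal.ofReal |c| * N x)
    (hsub : ∀ x y : F, N (x + y) ≤ N x + N y) : Convex ℝ {y | N y ≤ 1} := by
  intro y hy z hz a b ha hb hab
  calc N (a • y + b • z) ≤ ENNReal.ofReal a * N y + ENNReal.ofReal b * N z := by
        simpa only [hhom, abs_of_nonneg ha, abs_of_nonneg hb] using hsub (a • y) (b • z)
    _ ≤ ENNReal.ofReal a * 1 + ENNReal.ofReal b * 1 := by gcongr <;> assumption
    _ = 1 := by rw [mul_one, mul_one, ← ENNReal.ofReal_add ha hb, hab, ENNReal.ofReal_one]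

lemma mem_dominatedFunctionals_of_le_one [TopologicalSpace F]
    (hhom : ∀ (c : ℝ) (x : F), N (c • x) = ENNReal.ofReal |c| * N x)
    {g : F →L[ℝ] ℝ} (hg : ∀ y, N y < 1 → g y ≤ 1) : g ∈ dominatedFunctionals N := by
  intro y
  by_contra! hlt
  obtain ⟨t, ht0, hNt, htg⟩ := ENNReal.lt_iff_exists_real_btwn.mp hlt
  have htpos : 0 < t := ht0.lt_of_ne (by rintro rfl; simp at hNt)
  have hNy : N (t⁻¹ • y) < 1 := by
    rw [hhom, abs_of_pos (inv_pos.2 htpos), ENNReal.ofReal_inv_of_pos htpos,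
      ← ENNReal.div_eq_inv_mul]
    exact ENNReal.div_lt_of_lt_mul (by simpa using hNt)
  have hgy : t⁻¹ * g y ≤ 1 := by simpa using hg _ hNy
  have : g y ≤ t := by rwa [inv_mul_le_iff₀ htpos, mul_one] at hgy
  exact (ENNReal.ofReal_le_ofReal this).not_gt htg

lemma exists_mem_dominatedFunctionals_one_lt [TopologicalSpace F] [IsTopologicalAddGroup F]
    [ContinuousSMul ℝ F] [LocallyConvexSpace ℝ F]
    (hhom : ∀ (c : ℝ) (x : F), N (c • x) = ENNReal.ofReal |c| * N x)
    (hsub : ∀ x y : F, N (x + y) ≤ N x + N y) (hlsc : LowerSemicontinuous N)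
    {x : F} (hx : 1 < N x) : ∃ f ∈ dominatedFunctionals N, 1 < f x := by
  obtain ⟨f, u, hfu, hux⟩ := geometric_hahn_banach_closed_point (convex_setOf_le_one hhom hsub)
    (hlsc.isClosed_preimage 1) (not_le.2 hx)
  have hN0 : N 0 = 0 := by simpa using hhom 0 0
  have hu : 0 < u := by simpa using hfu 0 (by simp [hN0])
  refine ⟨u⁻¹ • f, mem_dominatedFunctionals_of_le_one hhom fun y hy => ?_, ?_⟩
  · simpa [inv_mul_le_iff₀ hu] using (hfu y hy.le).le
  · simpa [lt_inv_mul_iff₀ hu] using hux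

lemma eq_iSup_abs_of_forall_one_lt [TopologicalSpace F]
    (hhom : ∀ (c : ℝ) (x : F), N (c • x) = ENNReal.ofReal |c| * N x)
    {ι : Type*} {fs : ι → F →L[ℝ] ℝ} (hdom : ∀ i, fs i ∈ dominatedFunctionals N)
    (hsep : ∀ x, 1 < N x → ∃ i, 1 < fs i x) (x : F) :
    N x = ⨆ i, ENNReal.ofReal |fs i x| := by
  refine le_antisymm (ENNReal.le_of_forall_nnreal_lt fun q hq => ?_) (iSup_le fun i => ?_)
  · rcases eq_or_ne q 0 with rfl | hq0
    · simp
    have hqpos : (0 : ℝ) < q := by positivity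
    have hx : 1 < N ((q : ℝ)⁻¹ • x) := by
      rw [hhom, abs_of_pos (inv_pos.2 hqpos), ENNReal.ofReal_inv_of_pos hqpos,
        ENNReal.ofReal_coe_nnreal, ← ENNReal.div_eq_inv_mul]
      exact (ENNReal.lt_div_iff_mul_lt (.inl (by exact_mod_cast hq0)) (.inl ENNReal.coe_ne_top)).2
        (by simpa using hq)
    obtain ⟨i, hi⟩ := hsep _ hx
    have hqi : (q : ℝ) < fs i x := by simpa [lt_inv_mul_iff₀ hqpos] using hi
    calc (q : ℝ≥0∞) = ENNReal.ofReal q := ENNReal.ofReal_coe_nnreal.symm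
      _ ≤ ENNReal.ofReal |fs i x| := ENNReal.ofReal_le_ofReal (hqi.le.trans (le_abs_self _))
      _ ≤ ⨆ i, ENNReal.ofReal |fs i x| := le_iSup (fun i => ENNReal.ofReal |fs i x|) i
  · rcases abs_cases (fs i x) with ⟨h, -⟩ | ⟨h, -⟩
    · rw [h]
      exact hdom i x
    · have hneg : N (-x) = N x := by simpa using hhom (-1) x
      simpa [h, hneg] using hdom i (-x)

end PseudoSeminorm

theorem stmt9_general {F : Type*} [AddCommGroup F] [Module ℝ F] [TopologicalSpace F]
    [IsTopologicalAddGroup F] [ContinuousSMul ℝ F]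
    [LocallyConvexSpace ℝ F] [HereditarilyLindelofSpace F]
    (N : F → ℝ≥0∞)
    (hhom : ∀ (lam : ℝ) (x : F), N (lam • x) = ENNReal.ofReal |lam| * N x)
    (hsub : ∀ x y : F, N (x + y) ≤ N x + N y)
    (hlsc : LowerSemicontinuous N) :
    ∃ xs : ℕ → (F →L[ℝ] ℝ), ∀ x : F, N x = ⨆ n, ENNReal.ofReal |xs n x| := by
  have : Nonempty (dominatedFunctionals N) := ⟨⟨0, zero_mem_dominatedFunctionals⟩⟩
  obtain ⟨k, hk⟩ := eq_open_union_nat (fun f : dominatedFunctionals N => {x | 1 < f.1 x})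
    fun f => isOpen_lt continuous_const f.1.continuous
  refine ⟨fun n => k n, eq_iSup_abs_of_forall_one_lt hhom (fun n => (k n).2) fun x hx => ?_⟩
  obtain ⟨f, hf, hfx⟩ := exists_mem_dominatedFunctionals_one_lt hhom hsub hlsc hx
  have : x ∈ ⋃ f : dominatedFunctionals N, {x | 1 < f.1 x} := mem_iUnion.2 ⟨⟨f, hf⟩, hfx⟩
  simpa [← hk] using this

/-- a lower semicontinuous pseudo-seminorm on a strongly Lindelöf
locally convex Hausdorff TVS is a countable supremum of absolute values of
continuous linear functionals. -/
theorem stmt9 {F : Type*} [AddCommGroup F] [Module ℝ F] [TopologicalSpace F]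
    [IsTopologicalAddGroup F] [ContinuousSMul ℝ F] [T2Space F]
    [LocallyConvexSpace ℝ F] [HereditarilyLindelofSpace F]
    (N : F → ℝ≥0∞)
    (hhom : ∀ (lam : ℝ) (x : F), N (lam • x) = ENNReal.ofReal |lam| * N x)
    (hsub : ∀ x y : F, N (x + y) ≤ N x + N y)
    (hlsc : LowerSemicontinuous N) :
    ∃ xs : ℕ → (F →L[ℝ] ℝ), ∀ x : F, N x = ⨆ n, ENNReal.ofReal |xs n x| :=
  stmt9_general N hhom hsub hlsc
end

section
/- Let g(x) = x^{−3/2} e^{−x} for x > 0 and fix q ∈ (0, 1/2). Then sup_{u > 0} ( ∫_u^∞ x^{q−3/2} e^{−x} dx ) / ( u^q ∫_u^∞ x^{−3/2} e^{−x} dx ) < ∞. -/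
/-!
For `a < -1` the tail `∫_u^∞ x^a e^{-x} dx` is comparable, up to constants depending only on
`a`, to `u^a e^{-u} min(u, 1)`: for small `u` it behaves like `∫_u^∞ x^a dx ≍ u^{a+1}`, for
large `u` like `u^a e^{-u}`. With `a = q - 3/2` in the numerator and `a = -3/2` in the denominator the
weights differ exactly by the factor `u^q`, so the ratio is bounded.
-/

open MeasureTheory Set Real

lemma mul_le_setIntegral_Ioi_of_antitoneOn {f : ℝ → ℝ} {u c : ℝ} (huc : u < c)
    (hf : IntegrableOn f (Ioi u)) (hf_nonneg : ∀ x ∈ Ioi u, 0 ≤ f x)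
    (hf_anti : AntitoneOn f (Ioc u c)) :
    (c - u) * f c ≤ ∫ x in Ioi u, f x := by
  have hc : c ∈ Ioc u c := ⟨huc, le_rfl⟩
  calc (c - u) * f c = f c * volume.real (Ioc u c) := by
        rw [Real.volume_real_Ioc_of_le huc.le, mul_comm]
    _ ≤ ∫ x in Ioc u c, f x :=
        setIntegral_ge_of_const_le_real measurableSet_Ioc measure_Ioc_lt_top.ne
          (fun x hx => hf_anti hx hc hx.2) (hf.mono_set Ioc_subset_Ioi_self)
    _ ≤ ∫ x in Ioi u, f x :=
        setIntegral_mono_set hf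
          ((ae_restrict_iff' measurableSet_Ioi).2 (ae_of_all _ hf_nonneg))
          Ioc_subset_Ioi_self.eventuallyLE

section RpowMulExpNeg

variable {a u : ℝ}

lemma antitoneOn_rpow_mul_exp_neg (ha : a ≤ 0) :
    AntitoneOn (fun x : ℝ => x ^ a * exp (-x)) (Ioi 0) := fun _ hx _ _ hxy =>
  mul_le_mul (rpow_le_rpow_of_nonpos hx hxy ha) (exp_le_exp.2 (neg_le_neg hxy))
    (exp_nonneg _) (rpow_nonneg (le_of_lt hx) _)

lemma integrableOn_Ioi_rpow_mul_exp_neg (ha : a ≤ 0) (hu : 0 < u) :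
    IntegrableOn (fun x : ℝ => x ^ a * exp (-x)) (Ioi u) := by
  have hexp : IntegrableOn (fun x : ℝ => exp (-x)) (Ioi u) := by
    simpa using exp_neg_integrableOn_Ioi u one_pos
  refine (hexp.const_mul (u ^ a)).mono' ?_ ?_
  · exact (ContinuousOn.mul (fun x hx => (continuousAt_rpow_const x a
      (Or.inl (hu.trans hx).ne')).continuousWithinAt) (by fun_prop)).aestronglyMeasurable
      measurableSet_Ioi
  · filter_upwards [self_mem_ae_restrict measurableSet_Ioi] with x hx
    rw [norm_of_nonneg (by have := hu.trans hx; positivity)]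
    exact mul_le_mul_of_nonneg_right (rpow_le_rpow_of_nonpos hu (le_of_lt hx) ha) (exp_nonneg _)

lemma integral_Ioi_rpow_mul_exp_neg_le_rpow_mul_exp_neg (ha : a ≤ 0) (hu : 0 < u) :
    ∫ x in Ioi u, x ^ a * exp (-x) ≤ u ^ a * exp (-u) := by
  have hexp : IntegrableOn (fun x : ℝ => exp (-x)) (Ioi u) := by
    simpa using exp_neg_integrableOn_Ioi u one_pos
  calc ∫ x in Ioi u, x ^ a * exp (-x) ≤ ∫ x in Ioi u, u ^ a * exp (-x) :=
        setIntegral_mono_on (integrableOn_Ioi_rpow_mul_exp_neg ha hu) (hexp.const_mul _)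
          measurableSet_Ioi fun x hx =>
            mul_le_mul_of_nonneg_right (rpow_le_rpow_of_nonpos hu (le_of_lt hx) ha) (exp_nonneg _)
    _ = u ^ a * exp (-u) := by rw [integral_const_mul, integral_exp_neg_Ioi]

lemma integral_Ioi_rpow_mul_exp_neg_le_rpow (ha : a < -1) (hu : 0 < u) :
    ∫ x in Ioi u, x ^ a * exp (-x) ≤ u ^ (a + 1) / -(a + 1) := by
  calc ∫ x in Ioi u, x ^ a * exp (-x) ≤ ∫ x in Ioi u, x ^ a :=
        setIntegral_mono_on (integrableOn_Ioi_rpow_mul_exp_neg (ha.le.trans (by norm_num)) hu)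
          (integrableOn_Ioi_rpow_of_lt ha hu) measurableSet_Ioi fun x hx =>
            mul_le_of_le_one_right (rpow_nonneg (hu.trans hx).le _)
              (exp_le_one_iff.2 (by linarith [mem_Ioi.1 hx]))
    _ = u ^ (a + 1) / -(a + 1) := by rw [integral_Ioi_rpow_of_lt ha hu, div_neg, neg_div]

lemma integral_Ioi_rpow_mul_exp_neg_le (ha : a < -1) (hu : 0 < u) :
    ∫ x in Ioi u, x ^ a * exp (-x) ≤
      max (exp 1 / -(a + 1)) 1 * (u ^ a * exp (-u) * min u 1) := by
  have hw : 0 ≤ u ^ a * exp (-u) := by positivity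
  rcases le_total u 1 with hu1 | hu1
  · have hea : 0 < -(a + 1) := by linarith
    have hexp : 1 ≤ exp 1 * exp (-u) := by
      rw [← exp_add]; exact one_le_exp (by linarith)
    calc ∫ x in Ioi u, x ^ a * exp (-x) ≤ u ^ (a + 1) / -(a + 1) :=
          integral_Ioi_rpow_mul_exp_neg_le_rpow ha hu
      _ = 1 / -(a + 1) * (u ^ a * u) := by rw [rpow_add_one hu.ne']; ring
      _ ≤ exp 1 * exp (-u) / -(a + 1) * (u ^ a * u) := by gcongr
      _ = exp 1 / -(a + 1) * (u ^ a * exp (-u) * min u 1) := by rw [min_eq_left hu1]; ring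
      _ ≤ _ := by gcongr; exact le_max_left _ _
  · calc ∫ x in Ioi u, x ^ a * exp (-x) ≤ u ^ a * exp (-u) :=
          integral_Ioi_rpow_mul_exp_neg_le_rpow_mul_exp_neg (by linarith) hu
      _ = 1 * (u ^ a * exp (-u) * min u 1) := by rw [min_eq_right hu1]; ring
      _ ≤ _ := by gcongr; exact le_max_right _ _

lemma le_integral_Ioi_rpow_mul_exp_neg (ha : a ≤ 0) (hu : 0 < u) :
    2 ^ a * exp (-1) * (u ^ a * exp (-u) * min u 1) ≤ ∫ x in Ioi u, x ^ a * exp (-x) := by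
  set m := min u 1
  have hm : 0 < m := lt_min hu one_pos
  have hc : (u + m) ^ a ≥ 2 ^ a * u ^ a := by
    rw [← mul_rpow zero_le_two hu.le]
    exact rpow_le_rpow_of_nonpos (by linarith) (by linarith [min_le_left u 1]) ha
  have he : exp (-(u + m)) ≥ exp (-u) * exp (-1) := by
    rw [← exp_add]; exact exp_le_exp.2 (by linarith [min_le_right u 1])
  calc 2 ^ a * exp (-1) * (u ^ a * exp (-u) * m)
      = m * ((2 ^ a * u ^ a) * (exp (-u) * exp (-1))) := by ring
    _ ≤ m * ((u + m) ^ a * exp (-(u + m))) := by gcongr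
    _ = (u + m - u) * ((u + m) ^ a * exp (-(u + m))) := by ring
    _ ≤ ∫ x in Ioi u, x ^ a * exp (-x) :=
        mul_le_setIntegral_Ioi_of_antitoneOn (by linarith) (integrableOn_Ioi_rpow_mul_exp_neg ha hu)
          (fun x hx => by have := hu.trans hx; positivity)
          ((antitoneOn_rpow_mul_exp_neg ha).mono (Ioc_subset_Ioi_self.trans (Ioi_subset_Ioi hu.le)))

end RpowMulExpNeg

theorem stmt15_general (q : ℝ) (hq' : q < 1 / 2) :
    ∃ M : ℝ, ∀ u : ℝ, 0 < u →
      (∫ x in Set.Ioi u, x ^ (q - 3/2) * Real.exp (-x)) /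
        (u ^ q * ∫ x in Set.Ioi u, x ^ (-(3:ℝ)/2) * Real.exp (-x)) ≤ M := by
  set C := max (exp 1 / -(q - 3/2 + 1)) 1
  set c := (2 : ℝ) ^ (-(3:ℝ)/2) * exp (-1)
  have hc : 0 < c := by positivity
  refine ⟨C / c, fun u hu => ?_⟩
  set w := u ^ (-(3:ℝ)/2) * exp (-u) * min u 1
  have hw : 0 < w := by have := lt_min hu one_pos; positivity
  have hnum := integral_Ioi_rpow_mul_exp_neg_le (a := q - 3/2) (by linarith) hu
  have hden := le_integral_Ioi_rpow_mul_exp_neg (a := -(3:ℝ)/2) (by norm_num) hu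
  have hsplit : u ^ (q - 3/2) * exp (-u) * min u 1 = u ^ q * w := by
    rw [show q - 3/2 = q + -(3:ℝ)/2 by ring, rpow_add hu]; ring
  rw [hsplit] at hnum
  have hD : 0 < ∫ x in Ioi u, x ^ (-(3:ℝ)/2) * exp (-x) := (mul_pos hc hw).trans_le hden
  rw [div_le_iff₀ (by positivity)]
  calc _ ≤ C * (u ^ q * w) := hnum
    _ = C / c * (u ^ q * (c * w)) := by field_simp
    _ ≤ C / c * (u ^ q * ∫ x in Ioi u, x ^ (-(3:ℝ)/2) * exp (-x)) := by gcongr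

/-- for `0 < q < 1/2`,
`sup_{u>0} (∫_u^∞ x^{q-3/2} e^{-x} dx) / (u^q ∫_u^∞ x^{-3/2} e^{-x} dx) < ∞`. -/
theorem stmt15 (q : ℝ) (hq : 0 < q) (hq' : q < 1 / 2) :
    ∃ M : ℝ, ∀ u : ℝ, 0 < u →
      (∫ x in Set.Ioi u, x ^ (q - 3/2) * Real.exp (-x)) /
        (u ^ q * ∫ x in Set.Ioi u, x ^ (-(3:ℝ)/2) * Real.exp (-x)) ≤ M :=
  stmt15_general q hq'
end

section
/- Let Y be a symmetric square-integrable Lévy process with no Gaussian component and Lévy measure ν, and set ψ(s) = 4∫(1 ∧ |sx|²) ν(dx). Then for all t > 0, ‖Y_t‖₁ ≤ (1/π) ∫_ℝ (1 − e^{−tψ(s)})/s² ds ≤ (2 t^{1/2}/π) ∫_0^∞ ( (t ψ(t^{−1/2} s)) ∧ 1 ) / s² ds. -/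
/-!
For real `a`, `∫ (1 - cos (s a)) / s² ds = π |a|`: writing `1 / s² = ∫₀^∞ u e^{-su} du` and
integrating the Laplace transform of `1 - cos` first gives `∫₀^∞ (1 - cos s) / s² ds = π / 2`.
Integrating this identity against the law of `Y_t` and swapping the integrals (Tonelli) gives
`π E|Y_t| = ∫ (1 - Re φ(s)) / s² ds` with `φ(s) = exp (-t ∫ (1 - cos (s x)) ν(dx))`, and
`1 - cos y ≤ 4 (1 ∧ y²)` bounds the exponent by `ψ = levyExponentBound ν`. For the second inequality,
`1 - e^{-x} ≤ x ∧ 1`, the integrand is even, and `s ↦ t^{-1/2} s` rescales the half-line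
integral. All integrals converge because `ψ(s) ≤ 4 s² ∫ x² dν`.
-/

open MeasureTheory Real Set Filter

lemma one_sub_cos_le_four_mul_min (y : ℝ) : 1 - cos y ≤ 4 * min 1 (y ^ 2) := by
  rcases le_total 1 (y ^ 2) with h | h
  · rw [min_eq_left h]
    linarith [neg_one_le_cos y]
  · rw [min_eq_right h]
    nlinarith [one_sub_sq_div_two_le_cos (x := y)]

lemma one_sub_exp_neg_mul_div_sq_nonneg {t a : ℝ} (ht : 0 ≤ t) (ha : 0 ≤ a) (s : ℝ) :
    0 ≤ (1 - exp (-t * a)) / s ^ 2 :=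
  div_nonneg (sub_nonneg.2 (exp_le_one_iff.2 (by nlinarith))) (sq_nonneg s)

lemma one_sub_exp_neg_mul_div_sq_le (t a s : ℝ) :
    (1 - exp (-t * a)) / s ^ 2 ≤ min (t * a) 1 / s ^ 2 :=
  div_le_div_of_nonneg_right (le_min (by linarith [add_one_le_exp (-t * a)])
    (by linarith [exp_pos (-t * a)])) (sq_nonneg s)

lemma min_inv_sq_le {A : ℝ} (hA : 0 ≤ A) (s : ℝ) :
    min A (s ^ 2)⁻¹ ≤ 2 * (A + 1) * (1 + s ^ 2)⁻¹ := by
  rw [← div_eq_mul_inv]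
  rcases le_total (s ^ 2) 1 with h | h
  · refine (min_le_left _ _).trans ?_
    rw [le_div_iff₀ (by positivity)]
    nlinarith
  · refine (min_le_right _ _).trans ?_
    rw [inv_eq_one_div, div_le_div_iff₀ (by positivity) (by positivity)]
    nlinarith

lemma min_mul_sq_one_div_sq {A : ℝ} (hA : 0 ≤ A) (s : ℝ) :
    min (A * s ^ 2) 1 / s ^ 2 = min A (s ^ 2)⁻¹ := by
  rcases eq_or_ne s 0 with rfl | hs
  · simp [hA]
  · rw [← min_div_div_right (sq_nonneg s), mul_div_cancel_right₀ _ (pow_ne_zero 2 hs), one_div]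

lemma integrable_min_mul_sq_one_div_sq {A : ℝ} (hA : 0 ≤ A) :
    Integrable fun s : ℝ => min (A * s ^ 2) 1 / s ^ 2 := by
  simp_rw [min_mul_sq_one_div_sq hA]
  refine (integrable_inv_one_add_sq.const_mul (2 * (A + 1))).mono'
    (by fun_prop) (Eventually.of_forall fun s => ?_)
  rw [norm_of_nonneg (le_min hA (by positivity))]
  exact min_inv_sq_le hA s

lemma one_sub_cos_mul_div_sq_nonneg (s a : ℝ) : 0 ≤ (1 - cos (s * a)) / s ^ 2 :=
  div_nonneg (sub_nonneg.2 (cos_le_one _)) (sq_nonneg s)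

lemma one_sub_cos_mul_div_sq_le (s a : ℝ) :
    (1 - cos (s * a)) / s ^ 2 ≤ 4 * (min (a ^ 2 * s ^ 2) 1 / s ^ 2) := by
  rw [← mul_div_assoc, min_comm, ← mul_pow, mul_comm a]
  exact div_le_div_of_nonneg_right (one_sub_cos_le_four_mul_min _) (sq_nonneg s)

lemma integrable_one_sub_cos_mul_div_sq (a : ℝ) :
    Integrable fun s : ℝ => (1 - cos (s * a)) / s ^ 2 :=
  ((integrable_min_mul_sq_one_div_sq (sq_nonneg a)).const_mul 4).mono'
    (Measurable.aestronglyMeasurable (by fun_prop)) (Eventually.of_forall fun s => by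
      rw [norm_of_nonneg (one_sub_cos_mul_div_sq_nonneg s a)]
      exact one_sub_cos_mul_div_sq_le s a)

lemma integrableOn_mul_exp_neg_mul {s : ℝ} (hs : 0 < s) :
    IntegrableOn (fun u : ℝ => u * exp (-(s * u))) (Ioi 0) := by
  simpa using integrableOn_rpow_mul_exp_neg_mul_rpow (s := 1) (p := 1) (by norm_num) one_pos hs

lemma integral_mul_exp_neg_mul_Ioi {s : ℝ} (hs : 0 < s) :
    ∫ u in Ioi 0, u * exp (-(s * u)) = 1 / s ^ 2 := by
  simpa [Gamma_two, show (2 : ℝ) - 1 = 1 by norm_num] using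
    integral_rpow_mul_exp_neg_mul_Ioi (a := 2) two_pos hs

lemma integrableOn_exp_neg_mul {u : ℝ} (hu : 0 < u) :
    IntegrableOn (fun s : ℝ => exp (-(u * s))) (Ioi 0) := by
  simpa using integrableOn_exp_mul_Ioi (neg_lt_zero.2 hu) 0

lemma cos_mul_exp_neg_mul_eq_re (u s : ℝ) :
    cos s * exp (-(u * s)) = (Complex.exp ((-u + Complex.I) * s)).re := by
  simp [Complex.exp_re, mul_comm]

lemma integrableOn_cos_mul_exp_neg_mul {u : ℝ} (hu : 0 < u) :
    IntegrableOn (fun s : ℝ => cos s * exp (-(u * s))) (Ioi 0) := by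
  simp_rw [cos_mul_exp_neg_mul_eq_re u, ← RCLike.re_to_complex]
  exact (integrableOn_exp_mul_complex_Ioi (by simpa using hu) 0).re

lemma integral_cos_mul_exp_neg_mul_Ioi {u : ℝ} (hu : 0 < u) :
    ∫ s in Ioi 0, cos s * exp (-(u * s)) = u / (1 + u ^ 2) := by
  have ha : (-u + Complex.I).re < 0 := by simpa using hu
  simp_rw [cos_mul_exp_neg_mul_eq_re u, ← RCLike.re_to_complex,
    integral_re (integrableOn_exp_mul_complex_Ioi ha 0), integral_exp_mul_complex_Ioi ha 0]
  simp [Complex.div_re, Complex.normSq, sq, add_comm]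

lemma integrableOn_one_sub_cos_mul_exp_neg_mul {u : ℝ} (hu : 0 < u) :
    IntegrableOn (fun s : ℝ => (1 - cos s) * exp (-(u * s))) (Ioi 0) := by
  simp_rw [sub_mul, one_mul]
  exact (integrableOn_exp_neg_mul hu).sub (integrableOn_cos_mul_exp_neg_mul hu)

lemma integral_one_sub_cos_mul_exp_neg_mul_Ioi {u : ℝ} (hu : 0 < u) :
    ∫ s in Ioi 0, (1 - cos s) * exp (-(u * s)) = 1 / u - u / (1 + u ^ 2) := by
  simp_rw [sub_mul, one_mul]
  rw [integral_sub (integrableOn_exp_neg_mul hu) (integrableOn_cos_mul_exp_neg_mul hu),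
    integral_cos_mul_exp_neg_mul_Ioi hu]
  simpa using integral_exp_mul_Ioi (neg_lt_zero.2 hu) 0

lemma ofReal_one_sub_cos_div_sq_eq_lintegral {s : ℝ} (hs : 0 < s) :
    ENNReal.ofReal ((1 - cos s) / s ^ 2) =
      ∫⁻ u in Ioi 0, ENNReal.ofReal ((1 - cos s) * (u * exp (-(s * u)))) := by
  rw [← ofReal_integral_eq_lintegral_ofReal ((integrableOn_mul_exp_neg_mul hs).const_mul _)
    ((ae_restrict_iff' measurableSet_Ioi).2 (Eventually.of_forall fun u (hu : 0 < u) =>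
      mul_nonneg (sub_nonneg.2 (cos_le_one s)) (mul_nonneg hu.le (exp_pos _).le))),
    integral_const_mul, integral_mul_exp_neg_mul_Ioi hs, mul_one_div]

lemma lintegral_one_sub_cos_mul_mul_exp_neg_mul {u : ℝ} (hu : 0 < u) :
    ∫⁻ s in Ioi 0, ENNReal.ofReal ((1 - cos s) * (u * exp (-(s * u)))) =
      ENNReal.ofReal (1 + u ^ 2)⁻¹ := by
  have h_eq : (fun s => (1 - cos s) * (u * exp (-(s * u)))) =
      fun s => u * ((1 - cos s) * exp (-(u * s))) := by
    ext s
    ring_nf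
  rw [← ofReal_integral_eq_lintegral_ofReal
    (by rw [h_eq]; exact (integrableOn_one_sub_cos_mul_exp_neg_mul hu).const_mul u)
    (Eventually.of_forall fun s =>
      mul_nonneg (sub_nonneg.2 (cos_le_one s)) (mul_nonneg hu.le (exp_pos _).le)),
    h_eq, integral_const_mul, integral_one_sub_cos_mul_exp_neg_mul_Ioi hu]
  congr 1
  field_simp
  ring

theorem integral_Ioi_one_sub_cos_div_sq : ∫ s in Ioi 0, (1 - cos s) / s ^ 2 = π / 2 := by
  have h_meas : Measurable (Function.uncurry fun s u : ℝ =>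
      ENNReal.ofReal ((1 - cos s) * (u * exp (-(s * u))))) := by
    fun_prop
  have h_lintegral : ∫⁻ s in Ioi 0, ENNReal.ofReal ((1 - cos s) / s ^ 2) =
      ENNReal.ofReal (π / 2) := calc
    _ = ∫⁻ s in Ioi 0, ∫⁻ u in Ioi 0, ENNReal.ofReal ((1 - cos s) * (u * exp (-(s * u)))) :=
      setLIntegral_congr_fun measurableSet_Ioi fun s hs => ofReal_one_sub_cos_div_sq_eq_lintegral hs
    _ = ∫⁻ u in Ioi 0, ∫⁻ s in Ioi 0, ENNReal.ofReal ((1 - cos s) * (u * exp (-(s * u)))) :=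
      lintegral_lintegral_swap h_meas.aemeasurable
    _ = ∫⁻ u in Ioi 0, ENNReal.ofReal (1 + u ^ 2)⁻¹ :=
      setLIntegral_congr_fun measurableSet_Ioi fun u hu =>
        lintegral_one_sub_cos_mul_mul_exp_neg_mul hu
    _ = ENNReal.ofReal (π / 2) := by
      rw [← ofReal_integral_eq_lintegral_ofReal integrable_inv_one_add_sq.integrableOn
        (Eventually.of_forall fun u => by positivity), integral_Ioi_inv_one_add_sq, arctan_zero,
        sub_zero]
  rw [integral_eq_lintegral_of_nonneg_ae
    (Eventually.of_forall fun s => by simpa using one_sub_cos_mul_div_sq_nonneg s 1)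
    (Measurable.aestronglyMeasurable (by fun_prop)), h_lintegral,
    ENNReal.toReal_ofReal (by positivity)]

theorem integral_one_sub_cos_div_sq : ∫ s, (1 - cos s) / s ^ 2 = π := by
  have h := integral_comp_abs (f := fun s => (1 - cos s) / s ^ 2)
  simp only [cos_abs, sq_abs, integral_Ioi_one_sub_cos_div_sq] at h
  rw [h]
  ring

lemma one_sub_cos_mul_div_sq_eq (a s : ℝ) :
    (1 - cos (s * a)) / s ^ 2 = a ^ 2 * ((1 - cos (a * s)) / (a * s) ^ 2) := by
  rcases eq_or_ne a 0 with rfl | ha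
  · simp
  rcases eq_or_ne s 0 with rfl | hs
  · simp
  field_simp

theorem integral_one_sub_cos_mul_div_sq (a : ℝ) :
    ∫ s, (1 - cos (s * a)) / s ^ 2 = π * |a| := by
  simp_rw [one_sub_cos_mul_div_sq_eq a, integral_const_mul,
    Measure.integral_comp_mul_left (fun s => (1 - cos s) / s ^ 2), integral_one_sub_cos_div_sq,
    smul_eq_mul, abs_inv, ← sq_abs a]
  rcases eq_or_ne a 0 with rfl | ha
  · simp
  field_simp

section Moments

variable {Ω : Type*} [MeasurableSpace Ω] {μ : Measure Ω} {X : Ω → ℝ}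

lemma integrable_cos_mul [IsFiniteMeasure μ] (hX : AEMeasurable X μ) (s : ℝ) :
    Integrable (fun ω => cos (s * X ω)) μ :=
  .of_bound (by fun_prop) 1 (Eventually.of_forall fun ω => by simpa using abs_cos_le_one _)

lemma integral_cos_mul_eq_re [IsFiniteMeasure μ] (hX : AEMeasurable X μ) (s : ℝ) :
    ∫ ω, cos (s * X ω) ∂μ = (∫ ω, Complex.exp (s * X ω * Complex.I) ∂μ).re := by
  have h_int : Integrable (fun ω => Complex.exp (s * X ω * Complex.I)) μ :=
    .of_bound (by fun_prop) 1 (Eventually.of_forall fun ω => by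
      rw [← Complex.ofReal_mul, Complex.norm_exp_ofReal_mul_I])
  rw [← RCLike.re_to_complex, ← integral_re h_int]
  congr 1 with ω
  rw [← Complex.ofReal_mul, RCLike.re_to_complex, Complex.exp_ofReal_mul_I_re]

theorem integral_one_sub_integral_cos_div_sq [IsProbabilityMeasure μ] (hX : AEMeasurable X μ) :
    ∫ s, (1 - ∫ ω, cos (s * X ω) ∂μ) / s ^ 2 = π * ∫ ω, |X ω| ∂μ := by
  set g : ℝ → ℝ → ℝ := fun s x => (1 - cos (s * x)) / s ^ 2
  have hg_meas : AEMeasurable (fun p : ℝ × Ω => g p.1 (X p.2)) (volume.prod μ) :=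
    have hX' : AEMeasurable (fun p : ℝ × Ω => X p.2) (volume.prod μ) := hX.comp_snd
    by fun_prop
  have h_char : ∀ s, (1 - ∫ ω, cos (s * X ω) ∂μ) / s ^ 2 = ∫ ω, g s (X ω) ∂μ := fun s => by
    rw [integral_div, integral_sub (integrable_const 1) (integrable_cos_mul hX s), integral_const,
      probReal_univ, one_smul]
  have h_inner : ∀ x, ∫⁻ s, ENNReal.ofReal (g s x) = ENNReal.ofReal (π * |x|) := fun x => by
    rw [← ofReal_integral_eq_lintegral_ofReal (integrable_one_sub_cos_mul_div_sq x)
      (Eventually.of_forall fun s => one_sub_cos_mul_div_sq_nonneg s x),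
      integral_one_sub_cos_mul_div_sq]
  simp_rw [h_char]
  rw [integral_eq_lintegral_of_nonneg_ae
    (Eventually.of_forall fun s => integral_nonneg fun ω => one_sub_cos_mul_div_sq_nonneg s (X ω))
    hg_meas.aestronglyMeasurable.integral_prod_right', ← integral_const_mul,
    integral_eq_lintegral_of_nonneg_ae (Eventually.of_forall fun ω => by positivity)
      (by fun_prop)]
  congr 1
  calc ∫⁻ s, ENNReal.ofReal (∫ ω, g s (X ω) ∂μ)
      = ∫⁻ s, ∫⁻ ω, ENNReal.ofReal (g s (X ω)) ∂μ := lintegral_congr fun s =>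
        ofReal_integral_eq_lintegral_ofReal
          (((integrable_const 1).sub (integrable_cos_mul hX s)).div_const _)
          (Eventually.of_forall fun ω => one_sub_cos_mul_div_sq_nonneg s (X ω))
    _ = ∫⁻ ω, ∫⁻ s, ENNReal.ofReal (g s (X ω)) ∂volume ∂μ :=
        lintegral_lintegral_swap hg_meas.ennreal_ofReal
    _ = ∫⁻ ω, ENNReal.ofReal (π * |X ω|) ∂μ := lintegral_congr fun ω => h_inner (X ω)

end Moments

lemma integral_Ioi_comp_mul_left_div_sq (g : ℝ → ℝ) {b : ℝ} (hb : 0 < b) :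
    ∫ s in Ioi 0, g (b * s) / s ^ 2 = b * ∫ s in Ioi 0, g s / s ^ 2 := by
  have h : ∀ s, g (b * s) / s ^ 2 = b ^ 2 * (g (b * s) / (b * s) ^ 2) := fun s => by
    rcases eq_or_ne s 0 with rfl | hs
    · simp
    field_simp
  simp_rw [h, integral_const_mul, integral_comp_mul_left_Ioi (fun s => g s / s ^ 2) 0 hb, mul_zero,
    smul_eq_mul]
  field_simp

noncomputable def levyExponentBound (ν : Measure ℝ) (s : ℝ) : ℝ := 4 * ∫ x, min 1 ((s * x) ^ 2) ∂ν

section LevyExponentBound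

variable {ν : Measure ℝ}

lemma levyExponentBound_nonneg (s : ℝ) : 0 ≤ levyExponentBound ν s :=
  mul_nonneg zero_le_four (integral_nonneg fun _ => le_min zero_le_one (sq_nonneg _))

lemma levyExponentBound_abs (s : ℝ) : levyExponentBound ν |s| = levyExponentBound ν s := by
  simp only [levyExponentBound, mul_pow, sq_abs]

lemma measurable_levyExponentBound [SFinite ν] : Measurable (levyExponentBound ν) :=
  (((show Measurable fun p : ℝ × ℝ => min 1 ((p.1 * p.2) ^ 2) by fun_prop).stronglyMeasurable
    |>.integral_prod_right' (ν := ν)).measurable.const_mul 4)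

lemma integrable_min_one_mul_sq (hν : Integrable (fun x : ℝ => x ^ 2) ν) (s : ℝ) :
    Integrable (fun x => min 1 ((s * x) ^ 2)) ν :=
  (hν.const_mul (s ^ 2)).mono' (by fun_prop) (Eventually.of_forall fun x => by
    rw [norm_of_nonneg (le_min zero_le_one (sq_nonneg _)), ← mul_pow]
    exact min_le_right _ _)

lemma levyExponentBound_le (hν : Integrable (fun x : ℝ => x ^ 2) ν) (s : ℝ) :
    levyExponentBound ν s ≤ 4 * (∫ x, x ^ 2 ∂ν) * s ^ 2 := by
  rw [levyExponentBound, mul_assoc]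
  refine mul_le_mul_of_nonneg_left ?_ zero_le_four
  rw [mul_comm, ← integral_const_mul]
  exact integral_mono_of_nonneg (Eventually.of_forall fun _ => le_min zero_le_one (sq_nonneg _))
    (hν.const_mul _) (Eventually.of_forall fun x => by
      simpa only [mul_pow] using min_le_right _ _)

lemma integral_one_sub_cos_mul_le_levyExponentBound (hν : Integrable (fun x : ℝ => x ^ 2) ν)
    (s : ℝ) : ∫ x, (1 - cos (s * x)) ∂ν ≤ levyExponentBound ν s := by
  rw [levyExponentBound, ← integral_const_mul]
  exact integral_mono_of_nonneg (Eventually.of_forall fun x => sub_nonneg.2 (cos_le_one _))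
    ((integrable_min_one_mul_sq hν s).const_mul 4)
    (Eventually.of_forall fun x => one_sub_cos_le_four_mul_min _)

lemma integrable_min_mul_levyExponentBound_div_sq [SFinite ν]
    (hν : Integrable (fun x : ℝ => x ^ 2) ν) {t : ℝ} (ht : 0 ≤ t) :
    Integrable fun s => min (t * levyExponentBound ν s) 1 / s ^ 2 :=
  (integrable_min_mul_sq_one_div_sq (by positivity : 0 ≤ t * (4 * ∫ x, x ^ 2 ∂ν))).mono'
    (measurable_levyExponentBound.const_mul t |>.min measurable_const |>.div
      (by fun_prop)).aestronglyMeasurable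
    (Eventually.of_forall fun s => by
      rw [norm_of_nonneg (div_nonneg (le_min (mul_nonneg ht (levyExponentBound_nonneg s))
        zero_le_one) (sq_nonneg s)), mul_assoc]
      exact div_le_div_of_nonneg_right (min_le_min_right _
        (mul_le_mul_of_nonneg_left (levyExponentBound_le hν s) ht)) (sq_nonneg s))

theorem integral_abs_le_integral_one_sub_exp_levyExponentBound {Ω : Type*} [MeasurableSpace Ω]
    {μ : Measure Ω} [IsProbabilityMeasure μ] [SFinite ν] (hν : Integrable (fun x : ℝ => x ^ 2) ν)
    {X : Ω → ℝ} (hX : AEMeasurable X μ) {t : ℝ} (ht : 0 ≤ t)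
    (hchar : ∀ s : ℝ, ∫ ω, Complex.exp (s * X ω * Complex.I) ∂μ =
      exp (-t * ∫ x, (1 - cos (s * x)) ∂ν)) :
    ∫ ω, |X ω| ∂μ ≤ (1 / π) * ∫ s, (1 - exp (-t * levyExponentBound ν s)) / s ^ 2 := by
  have h_int : Integrable fun s => (1 - exp (-t * levyExponentBound ν s)) / s ^ 2 :=
    (integrable_min_mul_levyExponentBound_div_sq hν ht).mono'
      (Measurable.aestronglyMeasurable (by have := measurable_levyExponentBound (ν := ν); fun_prop))
      (Eventually.of_forall fun s => by
        rw [norm_of_nonneg (one_sub_exp_neg_mul_div_sq_nonneg ht (levyExponentBound_nonneg s) s)]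
        exact one_sub_exp_neg_mul_div_sq_le _ _ s)
  have h_exponent_nonneg : ∀ s, 0 ≤ ∫ x, (1 - cos (s * x)) ∂ν := fun s =>
    integral_nonneg fun x => sub_nonneg.2 (cos_le_one _)
  calc ∫ ω, |X ω| ∂μ = (1 / π) * ∫ s, (1 - ∫ ω, cos (s * X ω) ∂μ) / s ^ 2 := by
        rw [integral_one_sub_integral_cos_div_sq hX]
        field_simp
    _ ≤ (1 / π) * ∫ s, (1 - exp (-t * levyExponentBound ν s)) / s ^ 2 := by
        simp_rw [integral_cos_mul_eq_re hX, hchar, Complex.ofReal_re]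
        refine mul_le_mul_of_nonneg_left (integral_mono_of_nonneg (Eventually.of_forall fun s =>
          one_sub_exp_neg_mul_div_sq_nonneg ht (h_exponent_nonneg s) s) h_int
          (Eventually.of_forall fun s => ?_)) (by positivity)
        have := integral_one_sub_cos_mul_le_levyExponentBound hν s
        exact div_le_div_of_nonneg_right (sub_le_sub_left (exp_le_exp.2 (by nlinarith)) 1)
          (sq_nonneg s)

theorem integral_one_sub_exp_levyExponentBound_le [SFinite ν]
    (hν : Integrable (fun x : ℝ => x ^ 2) ν) {t : ℝ} (ht : 0 < t) :
    (1 / π) * ∫ s, (1 - exp (-t * levyExponentBound ν s)) / s ^ 2 ≤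
      (2 * t ^ ((1 : ℝ) / 2) / π) *
        ∫ s in Ioi 0, min (t * levyExponentBound ν (t ^ (-(1 : ℝ) / 2) * s)) 1 / s ^ 2 := by
  have h_even : ∫ s, (1 - exp (-t * levyExponentBound ν s)) / s ^ 2 =
      2 * ∫ s in Ioi 0, (1 - exp (-t * levyExponentBound ν s)) / s ^ 2 := by
    have h := integral_comp_abs (f := fun s => (1 - exp (-t * levyExponentBound ν s)) / s ^ 2)
    simpa only [levyExponentBound_abs, sq_abs] using h
  have h_mono : ∫ s in Ioi 0, (1 - exp (-t * levyExponentBound ν s)) / s ^ 2 ≤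
      ∫ s in Ioi 0, min (t * levyExponentBound ν s) 1 / s ^ 2 :=
    integral_mono_of_nonneg (Eventually.of_forall fun s =>
      one_sub_exp_neg_mul_div_sq_nonneg ht.le (levyExponentBound_nonneg s) s)
      (integrable_min_mul_levyExponentBound_div_sq hν ht.le).integrableOn
      (Eventually.of_forall fun s => one_sub_exp_neg_mul_div_sq_le _ _ s)
  have h_scale : t ^ ((1 : ℝ) / 2) * t ^ (-(1 : ℝ) / 2) = 1 := by
    rw [← rpow_add ht]
    norm_num
  rw [h_even, integral_Ioi_comp_mul_left_div_sq (fun s => min (t * levyExponentBound ν s) 1)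
    (rpow_pos_of_pos ht _)]
  calc 1 / π * (2 * ∫ s in Ioi 0, (1 - exp (-t * levyExponentBound ν s)) / s ^ 2)
      ≤ 1 / π * (2 * ∫ s in Ioi 0, min (t * levyExponentBound ν s) 1 / s ^ 2) := by gcongr
    _ = 2 * (t ^ ((1 : ℝ) / 2) * t ^ (-(1 : ℝ) / 2)) / π *
          ∫ s in Ioi 0, min (t * levyExponentBound ν s) 1 / s ^ 2 := by rw [h_scale]; ring
    _ = _ := by ring

end LevyExponentBound

/-- for a symmetric square-integrable Lévy process with no Gaussian
component and Lévy measure `ν`, setting `ψ(s) = 4∫ (1 ∧ |sx|²) ν(dx)`, for all `t > 0`: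
`E|Y_t| ≤ (1/π)∫ (1 - e^{-tψ(s)})/s² ds ≤ (2√t/π) ∫₀^∞ (tψ(t^{-1/2}s) ∧ 1)/s² ds`. -/
theorem stmt18 {Ω : Type*} [MeasurableSpace Ω] (μ : Measure Ω) [IsProbabilityMeasure μ]
    (ν : Measure ℝ) [SigmaFinite ν] (hν : Integrable (fun x : ℝ => x ^ 2) ν)
    (Y : ℝ → Ω → ℝ) (hint : ∀ t, 0 < t → Integrable (Y t) μ)
    (hchar : ∀ t, 0 < t → ∀ s : ℝ,
      (∫ ω, Complex.exp (s * Y t ω * Complex.I) ∂μ) =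
        Real.exp (-t * ∫ x, (1 - Real.cos (s * x)) ∂ν))
    (t : ℝ) (ht : 0 < t) :
    ((∫ ω, |Y t ω| ∂μ) ≤
      (1 / Real.pi) *
        ∫ s : ℝ, (1 - Real.exp (-t * (4 * ∫ x, min 1 ((s * x) ^ 2) ∂ν))) / s ^ 2) ∧
    ((1 / Real.pi) *
        (∫ s : ℝ, (1 - Real.exp (-t * (4 * ∫ x, min 1 ((s * x) ^ 2) ∂ν))) / s ^ 2) ≤
      (2 * t ^ ((1:ℝ)/2) / Real.pi) *
        ∫ s in Set.Ioi (0:ℝ),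
          min (t * (4 * ∫ x, min 1 ((t ^ (-(1:ℝ)/2) * s * x) ^ 2) ∂ν)) 1 / s ^ 2) :=
  ⟨integral_abs_le_integral_one_sub_exp_levyExponentBound hν (hint t ht).aemeasurable ht.le
      (hchar t ht),
    integral_one_sub_exp_levyExponentBound_le hν ht⟩
end
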